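/- Let G be a finite graph with a percolation measure, A and B sets of vertices, and f, g two increasing functions on configurations that are both determined by the cluster of A. Then E(f·g | A↮B) ≥ E(f | A↮B)·E(g | A↮B). If instead f is determined by the cluster of A and g by the cluster of B (both increasing), then E(f·g | A↮B) ≤ E(f | A↮B)·E(g | A↮B). -/

import Mathlib

open scoped BigOperators

structure PercGraph (V E : Type) where
  ends : E → V × V
  p : E → ℝ

namespace PercGraph

variable {V E : Type} [DecidableEq V] [Fintype E] [DecidableEq E]

/-- Weight of a configuration: each edge `e` is open (`ω e = true`) with probability `p e`. -/
def weight (G : PercGraph V E) (ω : E → Bool) : ℝ :=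
  ∏ e, if ω e then G.p e else 1 - G.p e

/-- Probability of an event under the percolation measure. -/
noncomputable def prob (G : PercGraph V E) (S : Set (E → Bool)) : ℝ :=
  ∑ ω : E → Bool, Set.indicator S G.weight ω

/-- Expectation of a function under the percolation measure. -/
noncomputable def expec (G : PercGraph V E) (f : (E → Bool) → ℝ) : ℝ :=
  ∑ ω : E → Bool, f ω * G.weight ω

/-- Two vertices are adjacent via an open edge in configuration `ω`. -/
def adj (G : PercGraph V E) (ω : E → Bool) (x y : V) : Prop :=
  ∃ e, ω e = true ∧ (G.ends e = (x, y) ∨ G.ends e = (y, x))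

/-- `x` and `y` are connected by a path of open edges. -/
def Conn (G : PercGraph V E) (ω : E → Bool) (x y : V) : Prop :=
  Relation.ReflTransGen (G.adj ω) x y

/-- The union of the open clusters of the vertices of `A`. -/
def cluster (G : PercGraph V E) (ω : E → Bool) (A : Set V) : Set V :=
  {y | ∃ a ∈ A, G.Conn ω a y}

/-- The event `x ↔ y`. -/
def connEvent (G : PercGraph V E) (x y : V) : Set (E → Bool) :=
  {ω | G.Conn ω x y}

/-- The event `x ↔ A`. -/
def connTo (G : PercGraph V E) (x : V) (A : Set V) : Set (E → Bool) :=
  {ω | ∃ a ∈ A, G.Conn ω x a}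

/-- The event `A ↮ B`. -/
def disconn (G : PercGraph V E) (A B : Set V) : Set (E → Bool) :=
  {ω | ∀ a ∈ A, ∀ b ∈ B, ¬ G.Conn ω a b}

def IncreasingEvent (S : Set (E → Bool)) : Prop :=
  ∀ ⦃ω ω' : E → Bool⦄, (∀ e, ω e = true → ω' e = true) → ω ∈ S → ω' ∈ S

def DecreasingEvent (S : Set (E → Bool)) : Prop :=
  ∀ ⦃ω ω' : E → Bool⦄, (∀ e, ω e = true → ω' e = true) → ω' ∈ S → ω ∈ S

def IncreasingFun (f : (E → Bool) → ℝ) : Prop :=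
  ∀ ⦃ω ω' : E → Bool⦄, (∀ e, ω e = true → ω' e = true) → f ω ≤ f ω'

/-- `f` is determined by the cluster of `A`. -/
def ClusterDetermined (G : PercGraph V E) (A : Set V) (f : (E → Bool) → ℝ) : Prop :=
  ∀ ω ω', G.cluster ω A = G.cluster ω' A → f ω = f ω'

/-- The event `S` is determined by the cluster of `A`. -/
def ClusterDeterminedEvent (G : PercGraph V E) (A : Set V) (S : Set (E → Bool)) : Prop :=
  ∀ ω ω', G.cluster ω A = G.cluster ω' A → (ω ∈ S ↔ ω' ∈ S)

noncomputable def condProb (G : PercGraph V E) (S T : Set (E → Bool)) : ℝ :=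
  G.prob (S ∩ T) / G.prob T

noncomputable def condExpec (G : PercGraph V E) (f : (E → Bool) → ℝ) (T : Set (E → Bool)) : ℝ :=
  G.expec (T.indicator f) / G.prob T

/-- The edge `e` is incident to the vertex `x`. -/
def incident (G : PercGraph V E) (x : V) (e : E) : Prop :=
  (G.ends e).1 = x ∨ (G.ends e).2 = x

/-- The other endpoint of an edge incident to `x`. -/
def otherEnd (G : PercGraph V E) (x : V) (e : E) : V :=
  if (G.ends e).1 = x then (G.ends e).2 else (G.ends e).1

/-- The graph `G ∖ W`: delete the vertices of `W` and all incident edges. -/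
def delete (G : PercGraph V E) (W : Finset V) :
    PercGraph V {e : E // (G.ends e).1 ∉ W ∧ (G.ends e).2 ∉ W} :=
  ⟨fun e => G.ends e.1, fun e => G.p e.1⟩

/-- The graph `G` with the probability of edge `e` replaced by `q`. -/
def withEdgeProb (G : PercGraph V E) (e : E) (q : ℝ) : PercGraph V E :=
  ⟨G.ends, Function.update G.p e q⟩

/-- Contraction of the edge `e`: set its probability to 1. -/
def contract (G : PercGraph V E) (e : E) : PercGraph V E :=
  G.withEdgeProb e 1

/-- The event that `e` is pivotal for `U`. -/
def pivotal (e : E) (U : Set (E → Bool)) : Set (E → Bool) :=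
  {ω | ¬ ((Function.update ω e true ∈ U) ↔ (Function.update ω e false ∈ U))}

/-- All edge probabilities lie in `[0,1]`. -/
def ProbValid (G : PercGraph V E) : Prop := ∀ e, 0 ≤ G.p e ∧ G.p e ≤ 1

end PercGraph

/-!
Induction on the number of edges. If no edge meets `B`, the event `A ↮ B` is empty or
everything, so the first inequality is Harris' inequality and in the second `g` is constant,
since the cluster of `B` is `B` itself. Otherwise condition on the state of an edge `e = bx`
with `b ∈ B`. If `e` is closed we are left with `A ↮ B` in `G ∖ e`; if it is open, with
`A ↮ B ∪ {x}` in `G ∖ e`, and on that event the cluster of `A` does not use `e`. Applied to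
the increasing function `1{x ∈ C(A)}`, which is determined by the cluster of `A`, the induction
hypothesis shows that conditioning on `A ↮ B ∪ {x}` instead of `A ↮ B` lowers the conditional
expectations of increasing functions of the cluster of `A` and raises those of increasing
functions of the cluster of `B`; this fixes the sign of the cross term when the two cases are
recombined.
-/

/-- `p` is the probability that the edge is open; index `1` refers to the open state of the
edge and `0` to the closed one. -/
lemma mix_mul_mix_le {p P₀ P₁ F₀ F₁ G₀ G₁ X₀ X₁ : ℝ} (hp₀ : 0 ≤ p) (hp₁ : p ≤ 1)
    (hP₀ : 0 ≤ P₀) (hP₁ : 0 ≤ P₁) (h₀ : F₀ * G₀ ≤ X₀ * P₀) (h₁ : F₁ * G₁ ≤ X₁ * P₁)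
    (hz₀ : P₀ = 0 → F₀ = 0 ∧ G₀ = 0 ∧ X₀ = 0) (hz₁ : P₁ = 0 → F₁ = 0 ∧ G₁ = 0 ∧ X₁ = 0)
    (hFG : 0 ≤ (F₀ * P₁ - F₁ * P₀) * (G₀ * P₁ - G₁ * P₀)) :
    (p * F₁ + (1 - p) * F₀) * (p * G₁ + (1 - p) * G₀) ≤
      (p * X₁ + (1 - p) * X₀) * (p * P₁ + (1 - p) * P₀) := by
  have hcross : F₁ * G₀ + F₀ * G₁ ≤ X₁ * P₀ + X₀ * P₁ := by
    rcases hP₀.eq_or_lt with h | hP₀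
    · obtain ⟨rfl, rfl, rfl⟩ := hz₀ h.symm
      simp [← h]
    rcases hP₁.eq_or_lt with h | hP₁
    · obtain ⟨rfl, rfl, rfl⟩ := hz₁ h.symm
      simp [← h]
    refine le_of_mul_le_mul_right ?_ (mul_pos hP₀ hP₁)
    nlinarith [mul_le_mul_of_nonneg_right h₀ (mul_nonneg hP₁.le hP₁.le),
      mul_le_mul_of_nonneg_right h₁ (mul_nonneg hP₀.le hP₀.le)]
  nlinarith [mul_le_mul_of_nonneg_left h₁ (mul_nonneg hp₀ hp₀),
    mul_le_mul_of_nonneg_left h₀ (mul_nonneg (sub_nonneg.2 hp₁) (sub_nonneg.2 hp₁)),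
    mul_le_mul_of_nonneg_left hcross (mul_nonneg hp₀ (sub_nonneg.2 hp₁))]

lemma mix_mul_mix_ge {p P₀ P₁ F₀ F₁ G₀ G₁ X₀ X₁ : ℝ} (hp₀ : 0 ≤ p) (hp₁ : p ≤ 1)
    (hP₀ : 0 ≤ P₀) (hP₁ : 0 ≤ P₁) (h₀ : X₀ * P₀ ≤ F₀ * G₀) (h₁ : X₁ * P₁ ≤ F₁ * G₁)
    (hz₀ : P₀ = 0 → F₀ = 0 ∧ G₀ = 0 ∧ X₀ = 0) (hz₁ : P₁ = 0 → F₁ = 0 ∧ G₁ = 0 ∧ X₁ = 0)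
    (hFG : (F₀ * P₁ - F₁ * P₀) * (G₀ * P₁ - G₁ * P₀) ≤ 0) :
    (p * X₁ + (1 - p) * X₀) * (p * P₁ + (1 - p) * P₀) ≤
      (p * F₁ + (1 - p) * F₀) * (p * G₁ + (1 - p) * G₀) := by
  have := mix_mul_mix_le (F₀ := F₀) (F₁ := F₁) (G₀ := -G₀) (G₁ := -G₁) (X₀ := -X₀) (X₁ := -X₁)
    hp₀ hp₁ hP₀ hP₁ (by linarith) (by linarith) (by simpa using hz₀) (by simpa using hz₁)
    (by nlinarith)
  linarith

namespace PercGraph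

section Expectation

variable {V E : Type}

lemma IncreasingFun.monotone {f : (E → Bool) → ℝ} (hf : IncreasingFun f) : Monotone f :=
  fun _ _ h => hf fun e he => le_antisymm (Bool.le_true _) (he ▸ h e)

section Weight

variable [Fintype E]

lemma weight_nonneg {G : PercGraph V E} (hp : G.ProbValid) (ω : E → Bool) :
    0 ≤ G.weight ω :=
  Finset.prod_nonneg fun e _ => by split_ifs <;> linarith [hp e]

lemma weight_inf_mul_weight_sup (G : PercGraph V E) (ω ω' : E → Bool) :
    G.weight ω * G.weight ω' = G.weight (ω ⊓ ω') * G.weight (ω ⊔ ω') := by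
  simp only [weight, ← Finset.prod_mul_distrib]
  refine Finset.prod_congr rfl fun e _ => ?_
  rcases h : ω e <;> rcases h' : ω' e <;> simp [h, h', mul_comm]

end Weight

variable [Fintype E] [DecidableEq E]

noncomputable def expecOn (G : PercGraph V E) (D : Set (E → Bool)) (φ : (E → Bool) → ℝ) : ℝ :=
  G.expec (D.indicator φ)

/-- `E[fg | D] ≥ E[f | D] E[g | D]`, cleared of denominators so that it is meaningful (and
trivially true) when `P(D) = 0`. -/
def PosCorrOn (G : PercGraph V E) (D : Set (E → Bool)) (f g : (E → Bool) → ℝ) : Prop :=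
  G.expecOn D f * G.expecOn D g ≤ G.expecOn D (fun ω => f ω * g ω) * G.prob D

def NegCorrOn (G : PercGraph V E) (D : Set (E → Bool)) (f g : (E → Bool) → ℝ) : Prop :=
  G.expecOn D (fun ω => f ω * g ω) * G.prob D ≤ G.expecOn D f * G.expecOn D g

def DisconnCorrelations (G : PercGraph V E) : Prop :=
  ∀ (A B : Set V) (f g : (E → Bool) → ℝ), IncreasingFun f → IncreasingFun g →
    G.ClusterDetermined A f →
    (G.ClusterDetermined A g → PosCorrOn G (G.disconn A B) f g) ∧
    (G.ClusterDetermined B g → NegCorrOn G (G.disconn A B) f g)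

lemma prob_eq_expecOn_one (G : PercGraph V E) (D : Set (E → Bool)) :
    G.prob D = G.expecOn D 1 := by
  refine Finset.sum_congr rfl fun ω _ => ?_
  by_cases hω : ω ∈ D <;> simp [hω]

lemma expecOn_congr (G : PercGraph V E) {D : Set (E → Bool)} {φ ψ : (E → Bool) → ℝ}
    (h : ∀ ω ∈ D, φ ω = ψ ω) : G.expecOn D φ = G.expecOn D ψ := by
  rw [expecOn, expecOn, Set.indicator_congr h]

lemma prob_nonneg {G : PercGraph V E} (hp : G.ProbValid) (D : Set (E → Bool)) :
    0 ≤ G.prob D :=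
  Finset.sum_nonneg fun ω _ => Set.indicator_nonneg (fun ω _ => weight_nonneg hp ω) ω

lemma expecOn_mono {G : PercGraph V E} (hp : G.ProbValid) {D : Set (E → Bool)}
    {φ ψ : (E → Bool) → ℝ} (h : ∀ ω ∈ D, φ ω ≤ ψ ω) : G.expecOn D φ ≤ G.expecOn D ψ := by
  refine Finset.sum_le_sum fun ω _ => mul_le_mul_of_nonneg_right ?_ (weight_nonneg hp ω)
  by_cases hω : ω ∈ D
  · simpa [Set.indicator_of_mem hω] using h ω hω
  · simp [Set.indicator_of_notMem hω]

lemma expecOn_eq_zero_of_prob_eq_zero {G : PercGraph V E} (hp : G.ProbValid)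
    {D : Set (E → Bool)} (hD : G.prob D = 0) (φ : (E → Bool) → ℝ) : G.expecOn D φ = 0 := by
  have hw := (Finset.sum_eq_zero_iff_of_nonneg fun ω _ =>
    Set.indicator_nonneg (fun ω _ => weight_nonneg hp ω) ω).1 hD
  refine Finset.sum_eq_zero fun ω _ => ?_
  by_cases hω : ω ∈ D
  · have := hw ω (Finset.mem_univ ω)
    rw [Set.indicator_of_mem hω] at this ⊢
    rw [this, mul_zero]
  · rw [Set.indicator_of_notMem hω, zero_mul]

lemma expecOn_indicator_one_mul (G : PercGraph V E) (D S : Set (E → Bool))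
    (φ : (E → Bool) → ℝ) :
    G.expecOn D (fun ω => S.indicator 1 ω * φ ω) = G.expecOn D φ - G.expecOn (D \ S) φ := by
  simp only [expecOn, expec, ← Finset.sum_sub_distrib]
  refine Finset.sum_congr rfl fun ω _ => ?_
  by_cases hD : ω ∈ D <;> by_cases hS : ω ∈ S <;> simp [hD, hS]

lemma expecOn_indicator_one (G : PercGraph V E) (D S : Set (E → Bool)) :
    G.expecOn D (S.indicator 1) = G.prob D - G.prob (D \ S) := by
  simpa [prob_eq_expecOn_one] using G.expecOn_indicator_one_mul D S 1

lemma expecOn_mul_const (G : PercGraph V E) (D : Set (E → Bool)) (φ : (E → Bool) → ℝ) (c : ℝ) :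
    G.expecOn D (fun ω => φ ω * c) = G.expecOn D φ * c := by
  simp only [expecOn, expec, Finset.sum_mul]
  refine Finset.sum_congr rfl fun ω _ => ?_
  by_cases hD : ω ∈ D <;> simp [hD, mul_right_comm]

/-- Harris' inequality, obtained from the FKG inequality on the lattice `E → Bool` after shifting
`f` and `g` to be nonnegative (both sides change by the same amount). -/
theorem expec_mul_expec_le {G : PercGraph V E} (hp : G.ProbValid) {f g : (E → Bool) → ℝ}
    (hf : IncreasingFun f) (hg : IncreasingFun g) :
    G.expec f * G.expec g ≤ G.expec (fun ω => f ω * g ω) * G.prob Set.univ := by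
  obtain ⟨c, hc⟩ := (Set.finite_range f).bddBelow
  obtain ⟨d, hd⟩ := (Set.finite_range g).bddBelow
  have key := fkg (f - fun _ => c) (g - fun _ => d) G.weight (weight_nonneg hp)
    (fun ω => sub_nonneg.2 (hc ⟨ω, rfl⟩)) (fun ω => sub_nonneg.2 (hd ⟨ω, rfl⟩))
    (fun _ _ h => sub_le_sub_right (hf.monotone h) c)
    (fun _ _ h => sub_le_sub_right (hg.monotone h) d)
    (fun ω ω' => (G.weight_inf_mul_weight_sup ω ω').le)
  simp only [expec, prob, Set.indicator_univ, Pi.sub_apply] at key ⊢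
  have hF : ∑ ω, G.weight ω * (f ω - c) = ∑ ω, f ω * G.weight ω - c * ∑ ω, G.weight ω := by
    rw [Finset.mul_sum, ← Finset.sum_sub_distrib]; exact Finset.sum_congr rfl fun _ _ => by ring
  have hG : ∑ ω, G.weight ω * (g ω - d) = ∑ ω, g ω * G.weight ω - d * ∑ ω, G.weight ω := by
    rw [Finset.mul_sum, ← Finset.sum_sub_distrib]; exact Finset.sum_congr rfl fun _ _ => by ring
  have hX : ∑ ω, G.weight ω * ((f ω - c) * (g ω - d)) = ∑ ω, f ω * g ω * G.weight ω
      - d * ∑ ω, f ω * G.weight ω - c * (∑ ω, g ω * G.weight ω - d * ∑ ω, G.weight ω) := by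
    simp only [Finset.mul_sum, ← Finset.sum_sub_distrib]
    exact Finset.sum_congr rfl fun _ _ => by ring
  rw [hF, hG, hX] at key
  linear_combination key

end Expectation

section EdgeSplit

variable {V E : Type}

def dropEdge (G : PercGraph V E) (e : E) : PercGraph V {e' : E // e' ≠ e} :=
  ⟨fun e' => G.ends e', fun e' => G.p e'⟩

lemma ProbValid.dropEdge {G : PercGraph V E} (hp : G.ProbValid) (e : E) :
    (G.dropEdge e).ProbValid :=
  fun e' => hp e'

variable [DecidableEq E]

def extendCfg (e : E) (b : Bool) (ω : {e' : E // e' ≠ e} → Bool) : E → Bool :=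
  (Equiv.funSplitAt e Bool).symm (b, ω)

@[simp] lemma extendCfg_self (e : E) (b : Bool) (ω : {e' : E // e' ≠ e} → Bool) :
    extendCfg e b ω e = b := by
  simp [extendCfg]

lemma extendCfg_of_ne {e e' : E} (h : e' ≠ e) (b : Bool) (ω : {e' : E // e' ≠ e} → Bool) :
    extendCfg e b ω e' = ω ⟨e', h⟩ := by
  simp [extendCfg, h]

lemma extendCfg_imp {e : E} {b b' : Bool} {ω ω' : {e' : E // e' ≠ e} → Bool}
    (hb : b = true → b' = true) (hω : ∀ e', ω e' = true → ω' e' = true) (e' : E) :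
    extendCfg e b ω e' = true → extendCfg e b' ω' e' = true := by
  by_cases h : e' = e
  · subst h; simpa using hb
  · simpa [extendCfg_of_ne h] using hω ⟨e', h⟩

lemma IncreasingFun.comp_extendCfg {f : (E → Bool) → ℝ} (hf : IncreasingFun f) (e : E)
    (b : Bool) : IncreasingFun fun ω => f (extendCfg e b ω) :=
  fun _ _ h => hf (extendCfg_imp id h)

lemma IncreasingFun.extendCfg_false_le {f : (E → Bool) → ℝ} (hf : IncreasingFun f) (e : E)
    (ω : {e' : E // e' ≠ e} → Bool) : f (extendCfg e false ω) ≤ f (extendCfg e true ω) :=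
  hf (extendCfg_imp (fun _ => rfl) fun _ => id)

variable [Fintype E]

lemma weight_extendCfg (G : PercGraph V E) (e : E) (b : Bool) (ω : {e' : E // e' ≠ e} → Bool) :
    G.weight (extendCfg e b ω) = (if b then G.p e else 1 - G.p e) * (G.dropEdge e).weight ω := by
  rw [weight, Fintype.prod_eq_mul_prod_subtype_ne _ e, extendCfg_self]
  congr 1
  exact Finset.prod_congr rfl fun e' _ => by rw [extendCfg_of_ne e'.2]; rfl

lemma sum_eq_sum_extendCfg (e : E) (F : (E → Bool) → ℝ) :
    ∑ ω, F ω = ∑ ω, F (extendCfg e true ω) + ∑ ω, F (extendCfg e false ω) := by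
  rw [← (Equiv.funSplitAt e Bool).symm.sum_comp, Fintype.sum_prod_type, Fintype.sum_bool]
  rfl

theorem expecOn_eq_extendCfg (G : PercGraph V E) (e : E) (D : Set (E → Bool))
    (φ : (E → Bool) → ℝ) :
    G.expecOn D φ =
      G.p e * (G.dropEdge e).expecOn (extendCfg e true ⁻¹' D) (φ ∘ extendCfg e true) +
      (1 - G.p e) * (G.dropEdge e).expecOn (extendCfg e false ⁻¹' D) (φ ∘ extendCfg e false) := by
  simp only [expecOn, expec, Finset.mul_sum, Set.indicator_comp_right]
  rw [sum_eq_sum_extendCfg e]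
  congr 1 <;> exact Finset.sum_congr rfl fun ω _ => by simp [weight_extendCfg]; ring

end EdgeSplit

section Connectivity

variable {V E : Type}

lemma adj_symm (G : PercGraph V E) (ω : E → Bool) {v w : V} (h : G.adj ω v w) : G.adj ω w v :=
  let ⟨e, he, hd⟩ := h; ⟨e, he, hd.symm⟩

lemma Conn.symm {G : PercGraph V E} {ω : E → Bool} {v w : V} (h : G.Conn ω v w) :
    G.Conn ω w v :=
  have : Std.Symm (G.adj ω) := ⟨fun _ _ => G.adj_symm ω⟩
  Std.Symm.symm (r := Relation.ReflTransGen (G.adj ω)) _ _ h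

lemma Conn.mono {G : PercGraph V E} {ω ω' : E → Bool} (hω : ∀ e, ω e = true → ω' e = true)
    {v w : V} (h : G.Conn ω v w) : G.Conn ω' v w :=
  Relation.ReflTransGen.mono (fun _ _ ⟨e, he, hd⟩ => ⟨e, hω e he, hd⟩) _ _ h

lemma disconn_union_singleton (G : PercGraph V E) (A B : Set V) (x : V) :
    G.disconn A (B ∪ {x}) = G.disconn A B \ {ω | x ∈ G.cluster ω A} := by
  ext ω
  simp only [disconn, cluster, Set.mem_union, Set.mem_singleton_iff, Set.mem_sdiff,
    Set.mem_ofPred_eq, not_exists, not_and]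
  exact ⟨fun h => ⟨fun a ha c hc => h a ha c (.inl hc), fun a ha => h a ha x (.inr rfl)⟩,
    fun ⟨h, hx⟩ a ha c => by rintro (hc | rfl); exacts [h a ha c hc, hx a ha]⟩

variable [DecidableEq E] (G : PercGraph V E) (e : E) (ω : {e' : E // e' ≠ e} → Bool)

lemma adj_extendCfg_false : G.adj (extendCfg e false ω) = (G.dropEdge e).adj ω := by
  ext v w
  constructor
  · rintro ⟨e', he', hd⟩
    have h : e' ≠ e := by rintro rfl; simp at he'
    exact ⟨⟨e', h⟩, by rwa [extendCfg_of_ne h] at he', hd⟩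
  · rintro ⟨e', he', hd⟩
    exact ⟨e', by rwa [extendCfg_of_ne e'.2], hd⟩

lemma conn_extendCfg_false : G.Conn (extendCfg e false ω) = (G.dropEdge e).Conn ω :=
  congrArg Relation.ReflTransGen (G.adj_extendCfg_false e ω)

lemma cluster_extendCfg_false (S : Set V) :
    G.cluster (extendCfg e false ω) S = (G.dropEdge e).cluster ω S := by
  simp only [cluster, conn_extendCfg_false]

lemma preimage_extendCfg_false_disconn (A B : Set V) :
    extendCfg e false ⁻¹' G.disconn A B = (G.dropEdge e).disconn A B := by
  ext ω
  simp only [Set.mem_preimage, disconn, Set.mem_ofPred_eq, conn_extendCfg_false]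

lemma adj_extendCfg_true {v w : V} :
    G.adj (extendCfg e true ω) v w ↔
      (G.dropEdge e).adj ω v w ∨ G.ends e = (v, w) ∨ G.ends e = (w, v) := by
  constructor
  · rintro ⟨e', he', hd⟩
    by_cases h : e' = e
    · exact .inr (h ▸ hd)
    · exact .inl ⟨⟨e', h⟩, by rwa [extendCfg_of_ne h] at he', hd⟩
  · rintro (⟨e', he', hd⟩ | hd)
    · exact ⟨e', by rwa [extendCfg_of_ne e'.2], hd⟩
    · exact ⟨e, by simp, hd⟩

lemma Conn.extendCfg_of_dropEdge {ω : {e' : E // e' ≠ e} → Bool} (b : Bool) {v w : V}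
    (h : (G.dropEdge e).Conn ω v w) : G.Conn (extendCfg e b ω) v w :=
  Relation.ReflTransGen.mono (fun _ _ ⟨e', he', hd⟩ =>
    ⟨e', by rwa [extendCfg_of_ne e'.2], hd⟩) _ _ h

end Connectivity

section OpenEdge

variable {V E : Type} (G : PercGraph V E) (e : E) {A B : Set V} {b x : V}

lemma ends_mem_union (hbx : G.ends e = (b, x) ∨ G.ends e = (x, b)) (hb : b ∈ B) {v w : V}
    (hd : G.ends e = (v, w) ∨ G.ends e = (w, v)) : v ∈ B ∪ {x} ∧ w ∈ B ∪ {x} := by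
  rcases hbx with h | h <;> rcases hd with h' | h' <;> rw [h, Prod.mk.injEq] at h' <;>
    obtain ⟨rfl, rfl⟩ := h' <;> simp [hb]

variable [DecidableEq E]

lemma Conn.dropEdge_of_extendCfg_true (hbx : G.ends e = (b, x) ∨ G.ends e = (x, b)) (hb : b ∈ B)
    {ω : {e' : E // e' ≠ e} → Bool} (hω : ω ∈ (G.dropEdge e).disconn A (B ∪ {x}))
    {a v : V} (ha : a ∈ A) (h : G.Conn (extendCfg e true ω) a v) :
    (G.dropEdge e).Conn ω a v := by
  induction h with
  | refl => exact .refl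
  | tail _ hadj ih =>
    rcases (G.adj_extendCfg_true e ω).1 hadj with h | hd
    · exact ih.tail h
    · exact absurd ih (hω a ha _ (G.ends_mem_union e hbx hb hd).1)

lemma preimage_extendCfg_true_disconn (hbx : G.ends e = (b, x) ∨ G.ends e = (x, b))
    (hb : b ∈ B) : extendCfg e true ⁻¹' G.disconn A B = (G.dropEdge e).disconn A (B ∪ {x}) := by
  ext ω
  constructor
  · rintro h a ha c (hc | rfl) hac
    · exact h a ha c hc (hac.extendCfg_of_dropEdge G e true)
    · exact h a ha b hb ((hac.extendCfg_of_dropEdge G e true).tail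
        ((G.adj_extendCfg_true e ω).2 (.inr hbx.symm)))
  · exact fun h a ha c hc hac => h a ha c (.inl hc) (hac.dropEdge_of_extendCfg_true G e hbx hb h ha)

lemma cluster_extendCfg_true_of_mem_disconn (hbx : G.ends e = (b, x) ∨ G.ends e = (x, b))
    (hb : b ∈ B) {ω : {e' : E // e' ≠ e} → Bool}
    (hω : ω ∈ (G.dropEdge e).disconn A (B ∪ {x})) :
    G.cluster (extendCfg e true ω) A = (G.dropEdge e).cluster ω A := by
  ext v
  exact ⟨fun ⟨a, ha, h⟩ => ⟨a, ha, h.dropEdge_of_extendCfg_true G e hbx hb hω ha⟩,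
    fun ⟨a, ha, h⟩ => ⟨a, ha, h.extendCfg_of_dropEdge G e true⟩⟩

lemma exists_conn_of_conn_extendCfg_true (hbx : G.ends e = (b, x) ∨ G.ends e = (x, b))
    (hb : b ∈ B) {ω : {e' : E // e' ≠ e} → Bool} {c v : V} (hc : c ∈ B ∪ {x})
    (h : G.Conn (extendCfg e true ω) c v) : ∃ c' ∈ B ∪ {x}, (G.dropEdge e).Conn ω c' v := by
  induction h with
  | refl => exact ⟨c, hc, .refl⟩
  | tail _ hadj ih =>
    obtain ⟨c', hc', h⟩ := ih
    rcases (G.adj_extendCfg_true e ω).1 hadj with h' | hd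
    · exact ⟨c', hc', h.tail h'⟩
    · exact ⟨_, (G.ends_mem_union e hbx hb hd).2, .refl⟩

lemma cluster_extendCfg_true (hbx : G.ends e = (b, x) ∨ G.ends e = (x, b)) (hb : b ∈ B)
    (ω : {e' : E // e' ≠ e} → Bool) :
    G.cluster (extendCfg e true ω) B = (G.dropEdge e).cluster ω (B ∪ {x}) := by
  ext v
  constructor
  · rintro ⟨c, hc, h⟩
    exact G.exists_conn_of_conn_extendCfg_true e hbx hb (.inl hc) h
  · rintro ⟨c, hc | rfl, h⟩
    · exact ⟨c, hc, h.extendCfg_of_dropEdge G e true⟩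
    · exact ⟨b, hb, .head ((G.adj_extendCfg_true e ω).2 (.inr hbx))
        (h.extendCfg_of_dropEdge G e true)⟩

end OpenEdge

section ClusterDetermined

variable {V E : Type}

lemma ClusterDetermined.mul {G : PercGraph V E} {S : Set V} {f g : (E → Bool) → ℝ}
    (hf : G.ClusterDetermined S f) (hg : G.ClusterDetermined S g) :
    G.ClusterDetermined S fun ω => f ω * g ω :=
  fun ω ω' h => congrArg₂ (· * ·) (hf ω ω' h) (hg ω ω' h)

lemma clusterDetermined_indicator_mem_cluster (G : PercGraph V E) (A : Set V) (x : V) :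
    G.ClusterDetermined A ({ω | x ∈ G.cluster ω A}.indicator 1) :=
  fun ω ω' h => by classical simp only [Set.indicator_apply, Set.mem_ofPred_eq, Pi.one_apply, h]

lemma increasingFun_indicator_mem_cluster (G : PercGraph V E) (A : Set V) (x : V) :
    IncreasingFun ({ω | x ∈ G.cluster ω A}.indicator (1 : (E → Bool) → ℝ)) := by
  intro ω ω' h
  by_cases hω : x ∈ G.cluster ω A
  · obtain ⟨a, ha, hc⟩ := hω
    rw [Set.indicator_of_mem (s := {ω | x ∈ G.cluster ω A}) ⟨a, ha, hc⟩,
      Set.indicator_of_mem (s := {ω | x ∈ G.cluster ω A}) ⟨a, ha, hc.mono h⟩]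
    exact le_rfl
  · rw [Set.indicator_of_notMem (s := {ω | x ∈ G.cluster ω A}) hω]
    exact Set.indicator_nonneg (fun _ _ => zero_le_one) _

section DropEdge

variable [DecidableEq E] (G : PercGraph V E) (e : E) {A B : Set V} {b x : V}

lemma ClusterDetermined.comp_extendCfg_false {S : Set V} {f : (E → Bool) → ℝ}
    (hf : G.ClusterDetermined S f) :
    (G.dropEdge e).ClusterDetermined S fun ω => f (extendCfg e false ω) :=
  fun ω ω' h => hf _ _ (by rw [cluster_extendCfg_false, cluster_extendCfg_false, h])

lemma ClusterDetermined.comp_extendCfg_true (hbx : G.ends e = (b, x) ∨ G.ends e = (x, b))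
    (hb : b ∈ B) {g : (E → Bool) → ℝ} (hg : G.ClusterDetermined B g) :
    (G.dropEdge e).ClusterDetermined (B ∪ {x}) fun ω => g (extendCfg e true ω) :=
  fun ω ω' h => hg _ _ (by
    rw [G.cluster_extendCfg_true e hbx hb, G.cluster_extendCfg_true e hbx hb, h])

lemma ClusterDetermined.extendCfg_true_eq (hbx : G.ends e = (b, x) ∨ G.ends e = (x, b))
    (hb : b ∈ B) {f : (E → Bool) → ℝ} (hf : G.ClusterDetermined A f)
    {ω : {e' : E // e' ≠ e} → Bool} (hω : ω ∈ (G.dropEdge e).disconn A (B ∪ {x})) :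
    f (extendCfg e true ω) = f (extendCfg e false ω) :=
  hf _ _ (by rw [G.cluster_extendCfg_true_of_mem_disconn e hbx hb hω, cluster_extendCfg_false])

variable [Fintype E]

theorem expecOn_disconn_eq (hbx : G.ends e = (b, x) ∨ G.ends e = (x, b)) (hb : b ∈ B)
    (φ : (E → Bool) → ℝ) :
    G.expecOn (G.disconn A B) φ =
      G.p e * (G.dropEdge e).expecOn ((G.dropEdge e).disconn A (B ∪ {x}))
          (fun ω => φ (extendCfg e true ω)) +
        (1 - G.p e) * (G.dropEdge e).expecOn ((G.dropEdge e).disconn A B)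
          (fun ω => φ (extendCfg e false ω)) := by
  rw [expecOn_eq_extendCfg, G.preimage_extendCfg_true_disconn e hbx hb,
    preimage_extendCfg_false_disconn]
  rfl

theorem expecOn_disconn_eq_of_clusterDetermined (hbx : G.ends e = (b, x) ∨ G.ends e = (x, b))
    (hb : b ∈ B) {φ : (E → Bool) → ℝ} (hφ : G.ClusterDetermined A φ) :
    G.expecOn (G.disconn A B) φ =
      G.p e * (G.dropEdge e).expecOn ((G.dropEdge e).disconn A (B ∪ {x}))
          (fun ω => φ (extendCfg e false ω)) +
        (1 - G.p e) * (G.dropEdge e).expecOn ((G.dropEdge e).disconn A B)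
          (fun ω => φ (extendCfg e false ω)) := by
  rw [G.expecOn_disconn_eq e hbx hb,
    expecOn_congr _ fun ω hω => hφ.extendCfg_true_eq G e hbx hb hω]

theorem prob_disconn_eq (hbx : G.ends e = (b, x) ∨ G.ends e = (x, b)) (hb : b ∈ B) :
    G.prob (G.disconn A B) =
      G.p e * (G.dropEdge e).prob ((G.dropEdge e).disconn A (B ∪ {x})) +
        (1 - G.p e) * (G.dropEdge e).prob ((G.dropEdge e).disconn A B) := by
  simp only [prob_eq_expecOn_one]
  exact G.expecOn_disconn_eq_of_clusterDetermined e hbx hb fun _ _ _ => rfl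

end DropEdge

end ClusterDetermined

section Conditioning

variable {V E : Type} [Fintype E] [DecidableEq E]

lemma expecOn_disconn_union_mul_prob_le_of_posCorrOn (G : PercGraph V E) {A B : Set V} {x : V}
    {φ : (E → Bool) → ℝ}
    (h : PosCorrOn G (G.disconn A B) ({ω | x ∈ G.cluster ω A}.indicator 1) φ) :
    G.expecOn (G.disconn A (B ∪ {x})) φ * G.prob (G.disconn A B) ≤
      G.expecOn (G.disconn A B) φ * G.prob (G.disconn A (B ∪ {x})) := by
  rw [PosCorrOn, expecOn_indicator_one, expecOn_indicator_one_mul,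
    ← disconn_union_singleton] at h
  linarith

lemma expecOn_disconn_mul_prob_le_of_negCorrOn (G : PercGraph V E) {A B : Set V} {x : V}
    {φ : (E → Bool) → ℝ}
    (h : NegCorrOn G (G.disconn A B) ({ω | x ∈ G.cluster ω A}.indicator 1) φ) :
    G.expecOn (G.disconn A B) φ * G.prob (G.disconn A (B ∪ {x})) ≤
      G.expecOn (G.disconn A (B ∪ {x})) φ * G.prob (G.disconn A B) := by
  rw [NegCorrOn, expecOn_indicator_one, expecOn_indicator_one_mul,
    ← disconn_union_singleton] at h
  linarith

end Conditioning

section Step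

variable {V E : Type} [Fintype E] [DecidableEq E] {G : PercGraph V E} (hp : G.ProbValid)
  {e : E} {A B : Set V} {b x : V}
  (hbx : G.ends e = (b, x) ∨ G.ends e = (x, b)) (hb : b ∈ B)
  (IH : (G.dropEdge e).DisconnCorrelations) {f g : (E → Bool) → ℝ}
  (hf : IncreasingFun f) (hg : IncreasingFun g) (hfA : G.ClusterDetermined A f)

include hp hbx hb IH hf hg hfA

theorem posCorrOn_disconn_of_dropEdge (hgA : G.ClusterDetermined A g) :
    PosCorrOn G (G.disconn A B) f g := by
  set G' := G.dropEdge e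
  have hp' := hp.dropEdge e
  have hz : ∀ D, G'.prob D = 0 → ∀ φ, G'.expecOn D φ = 0 :=
    fun D hD => expecOn_eq_zero_of_prob_eq_zero hp' hD
  have hh := G'.increasingFun_indicator_mem_cluster A x
  have hhA := G'.clusterDetermined_indicator_mem_cluster A x
  have hf₀ := hf.comp_extendCfg e false
  have hg₀ := hg.comp_extendCfg e false
  have hf₀A := hfA.comp_extendCfg_false G e
  have hg₀A := hgA.comp_extendCfg_false G e
  have hF := G'.expecOn_disconn_union_mul_prob_le_of_posCorrOn ((IH A B _ _ hh hf₀ hhA).1 hf₀A)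
  have hG := G'.expecOn_disconn_union_mul_prob_le_of_posCorrOn ((IH A B _ _ hh hg₀ hhA).1 hg₀A)
  rw [PosCorrOn, G.expecOn_disconn_eq_of_clusterDetermined e hbx hb hfA,
    G.expecOn_disconn_eq_of_clusterDetermined e hbx hb hgA,
    G.expecOn_disconn_eq_of_clusterDetermined e hbx hb (hfA.mul hgA), G.prob_disconn_eq e hbx hb]
  exact mix_mul_mix_le (hp e).1 (hp e).2 (prob_nonneg hp' _) (prob_nonneg hp' _)
    ((IH A B _ _ hf₀ hg₀ hf₀A).1 hg₀A) ((IH A (B ∪ {x}) _ _ hf₀ hg₀ hf₀A).1 hg₀A)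
    (fun h => ⟨hz _ h _, hz _ h _, hz _ h _⟩) (fun h => ⟨hz _ h _, hz _ h _, hz _ h _⟩)
    (mul_nonneg (by linarith) (by linarith))

theorem negCorrOn_disconn_of_dropEdge (hgB : G.ClusterDetermined B g) :
    NegCorrOn G (G.disconn A B) f g := by
  set G' := G.dropEdge e
  have hp' := hp.dropEdge e
  have hz : ∀ D, G'.prob D = 0 → ∀ φ, G'.expecOn D φ = 0 :=
    fun D hD => expecOn_eq_zero_of_prob_eq_zero hp' hD
  have hh := G'.increasingFun_indicator_mem_cluster A x
  have hhA := G'.clusterDetermined_indicator_mem_cluster A x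
  have hf₀ := hf.comp_extendCfg e false
  have hg₀ := hg.comp_extendCfg e false
  have hg₁ := hg.comp_extendCfg e true
  have hf₀A := hfA.comp_extendCfg_false G e
  have hg₀B := hgB.comp_extendCfg_false G e
  have hg₁B := hgB.comp_extendCfg_true G e hbx hb
  have hF := G'.expecOn_disconn_union_mul_prob_le_of_posCorrOn ((IH A B _ _ hh hf₀ hhA).1 hf₀A)
  have hG := (G'.expecOn_disconn_mul_prob_le_of_negCorrOn ((IH A B _ _ hh hg₀ hhA).2 hg₀B)).trans
    (mul_le_mul_of_nonneg_right (expecOn_mono hp' fun ω _ => hg.extendCfg_false_le e ω)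
      (prob_nonneg hp' _))
  have hX : G.expecOn (G.disconn A B) (fun ω => f ω * g ω) =
      G.p e * G'.expecOn (G'.disconn A (B ∪ {x}))
          (fun ω => f (extendCfg e false ω) * g (extendCfg e true ω)) +
        (1 - G.p e) * G'.expecOn (G'.disconn A B)
          (fun ω => f (extendCfg e false ω) * g (extendCfg e false ω)) := by
    rw [G.expecOn_disconn_eq e hbx hb,
      G'.expecOn_congr fun ω hω => by rw [hfA.extendCfg_true_eq G e hbx hb hω]]
  rw [NegCorrOn, G.expecOn_disconn_eq_of_clusterDetermined e hbx hb hfA,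
    G.expecOn_disconn_eq e hbx hb g, hX, G.prob_disconn_eq e hbx hb]
  exact mix_mul_mix_ge (hp e).1 (hp e).2 (prob_nonneg hp' _) (prob_nonneg hp' _)
    ((IH A B _ _ hf₀ hg₀ hf₀A).2 hg₀B) ((IH A (B ∪ {x}) _ _ hf₀ hg₁ hf₀A).2 hg₁B)
    (fun h => ⟨hz _ h _, hz _ h _, hz _ h _⟩) (fun h => ⟨hz _ h _, hz _ h _, hz _ h _⟩)
    (mul_nonpos_of_nonneg_of_nonpos (by linarith) (by linarith))

end Step

section Induction

variable {V E : Type}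

lemma disconn_eq_empty (G : PercGraph V E) {A B : Set V} (h : ¬Disjoint A B) :
    G.disconn A B = ∅ := by
  obtain ⟨a, haA, haB⟩ := Set.not_disjoint_iff.1 h
  exact Set.eq_empty_of_forall_notMem fun ω hω => hω a haA a haB .refl

lemma cluster_eq_self (G : PercGraph V E) {B : Set V}
    (hB : ∀ e, (G.ends e).1 ∉ B ∧ (G.ends e).2 ∉ B) (ω : E → Bool) : G.cluster ω B = B := by
  refine Set.Subset.antisymm ?_ fun v hv => ⟨v, hv, .refl⟩
  rintro v ⟨c, hc, h⟩
  induction h with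
  | refl => exact hc
  | tail _ hadj ih =>
    obtain ⟨e, -, hd | hd⟩ := hadj
    · exact absurd (hd ▸ ih) (hB e).1
    · exact absurd (hd ▸ ih) (hB e).2

lemma disconn_eq_univ (G : PercGraph V E) {A B : Set V}
    (hB : ∀ e, (G.ends e).1 ∉ B ∧ (G.ends e).2 ∉ B) (h : Disjoint A B) :
    G.disconn A B = Set.univ :=
  Set.eq_univ_of_forall fun ω _ ha c hc hac =>
    h.notMem_of_mem_left ha (G.cluster_eq_self hB ω ▸ ⟨c, hc, hac.symm⟩)

variable [Fintype E] [DecidableEq E]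

lemma posCorrOn_disconn_of_forall_notMem {G : PercGraph V E} (hp : G.ProbValid) {A B : Set V}
    (hB : ∀ e, (G.ends e).1 ∉ B ∧ (G.ends e).2 ∉ B) {f g : (E → Bool) → ℝ}
    (hf : IncreasingFun f) (hg : IncreasingFun g) : PosCorrOn G (G.disconn A B) f g := by
  by_cases hAB : Disjoint A B
  · rw [disconn_eq_univ G hB hAB, PosCorrOn]
    simpa only [expecOn, Set.indicator_univ] using expec_mul_expec_le hp hf hg
  · simp [PosCorrOn, disconn_eq_empty G hAB, expecOn, expec, prob]

lemma negCorrOn_disconn_of_forall_notMem {G : PercGraph V E} {A B : Set V}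
    (hB : ∀ e, (G.ends e).1 ∉ B ∧ (G.ends e).2 ∉ B) {f g : (E → Bool) → ℝ}
    (hgB : G.ClusterDetermined B g) : NegCorrOn G (G.disconn A B) f g := by
  have hg : ∀ ω, g ω = g 0 := fun ω =>
    hgB ω 0 (by rw [G.cluster_eq_self hB, G.cluster_eq_self hB])
  have hG := G.expecOn_mul_const (G.disconn A B) 1 (g 0)
  simp only [Pi.one_apply, one_mul, ← prob_eq_expecOn_one] at hG
  rw [NegCorrOn, G.expecOn_congr fun ω _ => by rw [hg ω], G.expecOn_mul_const,
    G.expecOn_congr fun ω _ => hg ω, hG]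
  exact le_of_eq (by ring)

theorem disconnCorrelations_of_dropEdge {G : PercGraph V E} (hp : G.ProbValid)
    (IH : ∀ e, (G.dropEdge e).DisconnCorrelations) : G.DisconnCorrelations := by
  intro A B f g hf hg hfA
  by_cases hB : ∀ e, (G.ends e).1 ∉ B ∧ (G.ends e).2 ∉ B
  · exact ⟨fun _ => posCorrOn_disconn_of_forall_notMem hp hB hf hg,
      negCorrOn_disconn_of_forall_notMem hB⟩
  obtain ⟨e, b, x, hbx, hb⟩ : ∃ e b x, (G.ends e = (b, x) ∨ G.ends e = (x, b)) ∧ b ∈ B := by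
    push Not at hB
    obtain ⟨e, he⟩ := hB
    by_cases h : (G.ends e).1 ∈ B
    exacts [⟨e, _, _, .inl rfl, h⟩, ⟨e, _, _, .inr rfl, he h⟩]
  exact ⟨posCorrOn_disconn_of_dropEdge hp hbx hb (IH e) hf hg hfA,
    negCorrOn_disconn_of_dropEdge hp hbx hb (IH e) hf hg hfA⟩

theorem disconnCorrelations (G : PercGraph V E) (hp : G.ProbValid) : G.DisconnCorrelations := by
  induction hn : Fintype.card E generalizing E with
  | zero =>
    exact disconnCorrelations_of_dropEdge hp fun e =>
      absurd hn (Fintype.card_pos_iff.2 ⟨e⟩).ne'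
  | succ n ih =>
    exact disconnCorrelations_of_dropEdge hp fun e =>
      ih (G.dropEdge e) (hp.dropEdge e) (by simp [hn])

lemma condExpec_eq (G : PercGraph V E) (f : (E → Bool) → ℝ) (D : Set (E → Bool)) :
    G.condExpec f D = G.expecOn D f / G.prob D :=
  rfl

lemma condExpec_mul_condExpec_le {G : PercGraph V E} (hp : G.ProbValid) {D : Set (E → Bool)}
    {f g : (E → Bool) → ℝ} (h : PosCorrOn G D f g) :
    G.condExpec f D * G.condExpec g D ≤ G.condExpec (fun ω => f ω * g ω) D := by
  rcases (prob_nonneg hp D).eq_or_lt with hD | hD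
  · simp [condExpec, ← hD]
  · rw [condExpec_eq, condExpec_eq, condExpec_eq, div_mul_div_comm,
      div_le_div_iff₀ (by positivity) hD]
    nlinarith [mul_le_mul_of_nonneg_right h hD.le]

lemma condExpec_le_condExpec_mul {G : PercGraph V E} (hp : G.ProbValid) {D : Set (E → Bool)}
    {f g : (E → Bool) → ℝ} (h : NegCorrOn G D f g) :
    G.condExpec (fun ω => f ω * g ω) D ≤ G.condExpec f D * G.condExpec g D := by
  rcases (prob_nonneg hp D).eq_or_lt with hD | hD
  · simp [condExpec, ← hD]
  · rw [condExpec_eq, condExpec_eq, condExpec_eq, div_mul_div_comm,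
      div_le_div_iff₀ hD (by positivity)]
    nlinarith [mul_le_mul_of_nonneg_right h hD.le]

end Induction

end PercGraph

theorem vdBHK_general
    {V E : Type} [Fintype E] [DecidableEq E]
    (G : PercGraph V E) (hp : G.ProbValid) (A B : Set V)
    (f g : (E → Bool) → ℝ)
    (hf : PercGraph.IncreasingFun f) (hg : PercGraph.IncreasingFun g)
    (hfA : G.ClusterDetermined A f) :
    (G.ClusterDetermined A g →
      G.condExpec f (G.disconn A B) * G.condExpec g (G.disconn A B)
        ≤ G.condExpec (fun ω => f ω * g ω) (G.disconn A B)) ∧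
    (G.ClusterDetermined B g →
      G.condExpec (fun ω => f ω * g ω) (G.disconn A B)
        ≤ G.condExpec f (G.disconn A B) * G.condExpec g (G.disconn A B)) := by
  have H := G.disconnCorrelations hp A B f g hf hg hfA
  exact ⟨fun hgA => PercGraph.condExpec_mul_condExpec_le hp (H.1 hgA),
    fun hgB => PercGraph.condExpec_le_condExpec_mul hp (H.2 hgB)⟩

/-- the van den Berg–Häggström–Kahn inequality. -/
theorem vdBHK
    {V E : Type} [DecidableEq V] [Fintype E] [DecidableEq E]
    (G : PercGraph V E) (hp : G.ProbValid) (A B : Set V)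
    (f g : (E → Bool) → ℝ)
    (hf : PercGraph.IncreasingFun f) (hg : PercGraph.IncreasingFun g)
    (hfA : G.ClusterDetermined A f) :
    (G.ClusterDetermined A g →
      G.condExpec f (G.disconn A B) * G.condExpec g (G.disconn A B)
        ≤ G.condExpec (fun ω => f ω * g ω) (G.disconn A B)) ∧
    (G.ClusterDetermined B g →
      G.condExpec (fun ω => f ω * g ω) (G.disconn A B)
        ≤ G.condExpec f (G.disconn A B) * G.condExpec g (G.disconn A B)) :=
  vdBHK_general G hp A B f g hf hg hfA
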